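/- arXiv:2411.16464 — 4 statements merged into one kernel-verified Lean document; each statement's English description precedes it below -/
import Mathlib

section
/- For every n ≥ 1, all parameters κ, γ, δ > 1 and every c ∈ (0,∞)ⁿ, the Individual Optimization Problem max_{α ∈ [0,1)ⁿ} U(α; c) has exactly one solution: there exists a unique α* ∈ [0,1)ⁿ such that U(α*; c) ≥ U(α; c) for all α ∈ [0,1)ⁿ, with strict inequality for α ≠ α*. -/
/-- The ALKY utility function with parameters κ, γ, δ and compatibility
vector c, as a function of the weight vector α. -/
noncomputable def ALKY (n : ℕ) (κ γ δ : ℝ) (c : Fin n → ℝ) (α : Fin n → ℝ) : ℝ :=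
  (∑ j, (κ * α j * c j - α j ^ γ / (1 - α j ^ γ))) - (∑ j, α j) ^ δ

/-!
U is strictly concave on the convex set [0,1)ⁿ: the linear part is concave, each penalty
t ↦ t^γ / (1 - t^γ) is the increasing convex map s ↦ s / (1 - s) applied to the strictly
convex t ↦ t^γ, and (∑ α_j)^δ is convex. Hence U has at most one maximiser. For existence,
let M < 1 be the level at which the penalty equals B = ∑ |κ c_j|. Since U(α) ≤ B - penalty(α_j)
for every j, U < 0 = U(0) as soon as some α_j > M, so the maximum of the continuous U on the
compact box [0,M]ⁿ is a maximum on all of [0,1)ⁿ.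
-/

open Set

theorem strictMonoOn_div_one_sub : StrictMonoOn (fun s : ℝ => s / (1 - s)) (Iio 1) := by
  intro s hs t ht hst
  simp only [mem_Iio] at hs ht
  rw [div_lt_div_iff₀ (by linarith) (by linarith)]
  nlinarith

theorem convexOn_div_one_sub : ConvexOn ℝ (Iio 1) fun s : ℝ => s / (1 - s) := by
  refine ⟨convex_Iio 1, fun s hs t ht a b ha hb hab => ?_⟩
  simp only [mem_Iio, smul_eq_mul] at hs ht ⊢
  obtain rfl : b = 1 - a := by linarith
  have hs' : 0 < 1 - s := by linarith
  have ht' : 0 < 1 - t := by linarith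
  have hst : 0 < 1 - (a * s + (1 - a) * t) := by
    nlinarith [mul_nonneg ha hs'.le, mul_nonneg hb ht'.le]
  rw [mul_div_assoc', mul_div_assoc', div_add_div _ _ hs'.ne' ht'.ne',
    div_le_div_iff₀ hst (by positivity)]
  nlinarith [mul_nonneg (mul_nonneg ha hb) (sq_nonneg (s - t)), mul_pos hs' ht']

theorem StrictConcaveOn.sum_pi {ι E : Type*} [Fintype ι] [AddCommGroup E] [Module ℝ E]
    {s : Set E} {f : ι → E → ℝ} (hf : ∀ i, StrictConcaveOn ℝ s (f i)) :
    StrictConcaveOn ℝ (univ.pi fun _ => s) fun x => ∑ i, f i (x i) := by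
  refine ⟨convex_pi fun i _ => (hf i).1, fun x hx y hy hxy a b ha hb hab => ?_⟩
  obtain ⟨i, hi⟩ := Function.ne_iff.1 hxy
  simp only [smul_eq_mul, Pi.add_apply, Pi.smul_apply, Finset.mul_sum, ← Finset.sum_add_distrib]
  exact Finset.sum_lt_sum
    (fun j _ => (hf j).concaveOn.2 (hx j trivial) (hy j trivial) ha.le hb.le hab)
    ⟨i, Finset.mem_univ i, (hf i).2 (hx i trivial) (hy i trivial) hi ha hb hab⟩

theorem IsCompact.exists_isMaxOn_of_forall_notMem_le {X Y : Type*} [TopologicalSpace X]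
    [LinearOrder Y] [TopologicalSpace Y] [ClosedIciTopology Y] {f : X → Y} {s K : Set X}
    (hK : IsCompact K) (hf : ContinuousOn f K) {x₀ : X} (hx₀ : x₀ ∈ K)
    (hout : ∀ x ∈ s, x ∉ K → f x ≤ f x₀) : ∃ x ∈ K, IsMaxOn f s x := by
  obtain ⟨x, hxK, hxmax⟩ := hK.exists_isMaxOn ⟨x₀, hx₀⟩ hf
  refine ⟨x, hxK, fun y hy => ?_⟩
  by_cases hyK : y ∈ K
  · exact hxmax hyK
  · exact (hout y hy hyK).trans (hxmax hx₀)

namespace ALKY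

noncomputable def penalty (γ x : ℝ) : ℝ := x ^ γ / (1 - x ^ γ)

abbrev feasibleSet (n : ℕ) : Set (Fin n → ℝ) := univ.pi fun _ => Ico 0 1

variable {γ : ℝ}

theorem penalty_nonneg (hγ : 0 < γ) {x : ℝ} (hx : x ∈ Ico 0 1) : 0 ≤ penalty γ x :=
  div_nonneg (Real.rpow_nonneg hx.1 γ) (by linarith [Real.rpow_lt_one hx.1 hx.2 hγ])

theorem strictMonoOn_penalty (hγ : 0 < γ) : StrictMonoOn (penalty γ) (Ico 0 1) :=
  fun _ hx _ hy hxy => strictMonoOn_div_one_sub (Real.rpow_lt_one hx.1 hx.2 hγ)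
    (Real.rpow_lt_one hy.1 hy.2 hγ) (Real.rpow_lt_rpow hx.1 hxy hγ)

theorem strictConvexOn_penalty (hγ : 1 < γ) : StrictConvexOn ℝ (Ico 0 1) (penalty γ) := by
  refine ⟨convex_Ico 0 1, fun x hx y hy hxy a b ha hb hab => ?_⟩
  have hγ0 : 0 < γ := by linarith
  have hxγ := Real.rpow_lt_one hx.1 hx.2 hγ0
  have hyγ := Real.rpow_lt_one hy.1 hy.2 hγ0
  have hpow := (strictConvexOn_rpow hγ).2 hx.1 hy.1 hxy ha hb hab
  have hmid : a * x ^ γ + b * y ^ γ < 1 := by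
    nlinarith [mul_le_mul_of_nonneg_left hxγ.le ha.le, mul_le_mul_of_nonneg_left hyγ.le hb.le]
  calc penalty γ (a • x + b • y)
      < (a * x ^ γ + b * y ^ γ) / (1 - (a * x ^ γ + b * y ^ γ)) :=
        strictMonoOn_div_one_sub (hmid.trans_le' hpow.le) hmid hpow
    _ ≤ a • penalty γ x + b • penalty γ y :=
        convexOn_div_one_sub.2 hxγ hyγ ha.le hb.le hab

theorem exists_penalty_eq (hγ : 0 < γ) {B : ℝ} (hB : 0 ≤ B) :
    ∃ M ∈ Ico (0 : ℝ) 1, penalty γ M = B := by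
  have ht0 : 0 ≤ B / (B + 1) := by positivity
  have ht1 : B / (B + 1) < 1 := by rw [div_lt_one (by linarith)]; linarith
  refine ⟨(B / (B + 1)) ^ γ⁻¹,
    ⟨Real.rpow_nonneg ht0 _, Real.rpow_lt_one ht0 ht1 (by positivity)⟩, ?_⟩
  rw [penalty, ← Real.rpow_mul ht0, inv_mul_cancel₀ hγ.ne', Real.rpow_one]
  field_simp
  ring

variable {n : ℕ} {κ δ : ℝ} {c : Fin n → ℝ}

theorem strictConcaveOn (hγ : 1 < γ) (hδ : 1 ≤ δ) :
    StrictConcaveOn ℝ (feasibleSet n) (ALKY n κ γ δ c) := by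
  have hcoord : ∀ j, StrictConcaveOn ℝ (Ico 0 1) fun x => κ * x * c j - penalty γ x :=
    fun j => ConcaveOn.sub_strictConvexOn
      ⟨convex_Ico 0 1, fun _ _ _ _ _ _ _ _ _ => le_of_eq (by simp only [smul_eq_mul]; ring)⟩
      (strictConvexOn_penalty hγ)
  have htotal : ConvexOn ℝ (feasibleSet n) fun α => (∑ j, α j) ^ δ := by
    refine ⟨convex_pi fun _ _ => convex_Ico 0 1, fun x hx y hy a b ha hb hab => ?_⟩
    have hsum : ∑ j, (a • x + b • y) j = a * ∑ j, x j + b * ∑ j, y j := by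
      simp only [Pi.add_apply, Pi.smul_apply, smul_eq_mul, Finset.sum_add_distrib,
        Finset.mul_sum]
    dsimp only
    rw [hsum]
    exact (convexOn_rpow hδ).2 (Finset.sum_nonneg fun j _ => (hx j trivial).1)
      (Finset.sum_nonneg fun j _ => (hy j trivial).1) ha hb hab
  exact (StrictConcaveOn.sum_pi hcoord).sub_convexOn htotal

theorem continuousOn (hγ : 0 < γ) (hδ : 0 < δ) :
    ContinuousOn (ALKY n κ γ δ c) (feasibleSet n) := by
  have hden : ∀ j, ∀ α ∈ feasibleSet n, 1 - α j ^ γ ≠ 0 := fun j α hα =>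
    (sub_pos.2 (Real.rpow_lt_one (hα j trivial).1 (hα j trivial).2 hγ)).ne'
  unfold ALKY
  fun_prop (disch := first | exact hden _ | positivity)

theorem le_sub_penalty (hγ : 0 < γ) {α : Fin n → ℝ} (hα : α ∈ feasibleSet n)
    (j : Fin n) : ALKY n κ γ δ c α ≤ ∑ i, |κ * c i| - penalty γ (α j) := by
  have hlin : ∑ i, κ * α i * c i ≤ ∑ i, |κ * c i| := Finset.sum_le_sum fun i _ => by
    have := hα i trivial
    calc κ * α i * c i = α i * (κ * c i) := by ring
      _ ≤ α i * |κ * c i| := mul_le_mul_of_nonneg_left (le_abs_self _) this.1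
      _ ≤ |κ * c i| := mul_le_of_le_one_left (abs_nonneg _) this.2.le
  have hpen : penalty γ (α j) ≤ ∑ i, penalty γ (α i) :=
    Finset.single_le_sum (fun i _ => penalty_nonneg hγ (hα i trivial)) (Finset.mem_univ j)
  have htotal : 0 ≤ (∑ i, α i) ^ δ :=
    Real.rpow_nonneg (Finset.sum_nonneg fun i _ => (hα i trivial).1) δ
  have hsplit : ALKY n κ γ δ c α
      = ∑ i, κ * α i * c i - ∑ i, penalty γ (α i) - (∑ i, α i) ^ δ := by
    rw [ALKY, Finset.sum_sub_distrib]; rfl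
  linarith

theorem zero (hγ : γ ≠ 0) (hδ : δ ≠ 0) : ALKY n κ γ δ c 0 = 0 := by
  simp [ALKY, Real.zero_rpow hγ, Real.zero_rpow hδ]

theorem exists_isMaxOn (hγ : 0 < γ) (hδ : 0 < δ) :
    ∃ α ∈ feasibleSet n, IsMaxOn (ALKY n κ γ δ c) (feasibleSet n) α := by
  obtain ⟨M, hM, hMB⟩ :=
    exists_penalty_eq hγ (Finset.sum_nonneg fun i _ => abs_nonneg (κ * c i))
  set K : Set (Fin n → ℝ) := univ.pi fun _ => Icc 0 M
  have hKS : K ⊆ feasibleSet n := pi_mono fun _ _ => Icc_subset_Ico_right hM.2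
  have hout : ∀ α ∈ feasibleSet n, α ∉ K →
      ALKY n κ γ δ c α ≤ ALKY n κ γ δ c 0 := by
    intro α hα hαK
    obtain ⟨j, hj⟩ : ∃ j, M < α j := by
      by_contra! h
      exact hαK fun j _ => ⟨(hα j trivial).1, h j⟩
    have hpen := strictMonoOn_penalty hγ hM (hα j trivial) hj
    rw [zero hγ.ne' hδ.ne']
    linarith [le_sub_penalty (κ := κ) (δ := δ) (c := c) hγ hα j]
  obtain ⟨α, hαK, hαmax⟩ := IsCompact.exists_isMaxOn_of_forall_notMem_le
    (isCompact_univ_pi fun _ => isCompact_Icc) ((continuousOn hγ hδ).mono hKS)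
    (fun _ _ => ⟨le_rfl, hM.1⟩) hout
  exact ⟨α, hKS hαK, hαmax⟩

end ALKY

theorem stmt_8_general (n : ℕ) (κ γ δ : ℝ) (hγ : 1 < γ) (hδ : 1 < δ)
    (c : Fin n → ℝ) :
    ∃! αstar : Fin n → ℝ, (∀ j, αstar j ∈ Set.Ico (0:ℝ) 1) ∧
      ∀ α : Fin n → ℝ, (∀ j, α j ∈ Set.Ico (0:ℝ) 1) →
        ALKY n κ γ δ c α ≤ ALKY n κ γ δ c αstar ∧
        (α ≠ αstar → ALKY n κ γ δ c α < ALKY n κ γ δ c αstar) := by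
  simp only [← mem_univ_pi]
  obtain ⟨αstar, hS, hmax⟩ := ALKY.exists_isMaxOn (κ := κ) (c := c)
    (zero_lt_one.trans hγ) (zero_lt_one.trans hδ)
  have hunique : ∀ α ∈ ALKY.feasibleSet n, IsMaxOn (ALKY n κ γ δ c) _ α → α = αstar :=
    fun α hα hαmax => (ALKY.strictConcaveOn hγ hδ.le).eq_of_isMaxOn hαmax hmax hα hS
  refine ⟨αstar, ⟨hS, fun α hα => ⟨hmax hα, fun hne => ?_⟩⟩, ?_⟩
  · exact (hmax hα).lt_of_ne fun heq => hne (hunique α hα fun β hβ => heq ▸ hmax hβ)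
  · rintro α ⟨hα, hαmax⟩
    exact hunique α hα fun β hβ => (hαmax β hβ).1

/-- For every n ≥ 1, κ, γ, δ > 1 and c ∈ (0,∞)ⁿ, the Individual Optimization
Problem max_{α ∈ [0,1)ⁿ} U(α; c) has exactly one solution: a unique α* in
[0,1)ⁿ dominating every other feasible α, strictly when α ≠ α*. -/
theorem stmt_8 (n : ℕ) (hn : 1 ≤ n) (κ γ δ : ℝ) (hκ : 1 < κ) (hγ : 1 < γ) (hδ : 1 < δ)
    (c : Fin n → ℝ) (hc : ∀ j, 0 < c j) :
    ∃! αstar : Fin n → ℝ, (∀ j, αstar j ∈ Set.Ico (0:ℝ) 1) ∧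
      ∀ α : Fin n → ℝ, (∀ j, α j ∈ Set.Ico (0:ℝ) 1) →
        ALKY n κ γ δ c α ≤ ALKY n κ γ δ c αstar ∧
        (α ≠ αstar → ALKY n κ γ δ c α < ALKY n κ γ δ c αstar) :=
  stmt_8_general n κ γ δ hγ hδ c
end

section
/- Let N ≥ 2, κ, γ, δ > 1, let α ∈ [0,1)^{n_N} have no isolated vertex, and let C̄ be the unique compatibility list at which the gradient of O vanishes at α (given by 2κ c̄_{ij} = 2γ α_{ij}^{γ−1}/(1 − α_{ij}^γ)² + δ (Σ_{k≠i} α_{ik})^{δ−1} + δ (Σ_{k≠j} α_{jk})^{δ−1}). Then for every compatibility list C of positive reals satisfying c_{ij} = c̄_{ij} whenever α_{ij} > 0 and 0 < c_{ij} ≤ c̄_{ij} whenever α_{ij} = 0, the weight list α is the unique solution of the Social Optimization Problem with compatibility list C. -/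
/-!
The social objective is strictly concave on the feasible set: each utility is linear in the
compatibilities minus the strictly convex link costs `x ^ γ / (1 - x ^ γ)` and the convex
`(Σ_{k≠i} α_{ik}) ^ δ`. So `O(β)` is at most its first-order expansion at `α`, minus a Bregman
gap of the link costs that is positive once `β ≠ α`. The choice of `c` makes the first-order
term nonpositive: the derivative of `O` in the pair `{i, j}` is `2κ (c_{ij} - c̄_{ij})`, which
vanishes where `α_{ij} > 0` and is `≤ 0` where `α_{ij} = 0`, the only feasible direction there
being `β_{ij} ≥ 0`.
-/

/-- ALKY utility of individual `i` given the compatibility matrix `c` and the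
(symmetric) weight matrix `α`: sum over the other individuals j ≠ i. -/
noncomputable def Uind (N : ℕ) (κ γ δ : ℝ) (c : Fin N → Fin N → ℝ) (i : Fin N)
    (α : Fin N → Fin N → ℝ) : ℝ :=
  (∑ j ∈ Finset.univ.erase i, (κ * α i j * c i j - α i j ^ γ / (1 - α i j ^ γ)))
    - (∑ j ∈ Finset.univ.erase i, α i j) ^ δ

/-- The social objective: the sum of the individual utilities. -/
noncomputable def socialObj (N : ℕ) (κ γ δ : ℝ) (c : Fin N → Fin N → ℝ)
    (α : Fin N → Fin N → ℝ) : ℝ :=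
  ∑ i, Uind N κ γ δ c i α

/-- The feasible set of the Social Optimization Problem: symmetric weight
lists with zero diagonal, off-diagonal weights in [0,1), and no isolated
vertex (every individual has at least one strictly positive edge weight). -/
def WeightFeasible (N : ℕ) (α : Fin N → Fin N → ℝ) : Prop :=
  (∀ i j, α i j = α j i) ∧ (∀ i, α i i = 0) ∧
  (∀ i j, i ≠ j → α i j ∈ Set.Ico (0:ℝ) 1) ∧
  (∀ i, ∃ j, j ≠ i ∧ 0 < α i j)

open Finset

lemma rpow_tangent_le {p : ℝ} (hp : 1 ≤ p) {x y : ℝ} (hx : 0 ≤ x) (hy : 0 ≤ y) :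
    x ^ p + p * x ^ (p - 1) * (y - x) ≤ y ^ p := by
  rcases hp.eq_or_lt with rfl | hp
  · simp
  rcases hx.eq_or_lt with rfl | hx
  · simp [Real.zero_rpow (by linarith : p ≠ 0), Real.zero_rpow (by linarith : p - 1 ≠ 0),
      Real.rpow_nonneg hy p]
  -- Bernoulli's inequality at `s = (y - x) / x`, scaled by `x ^ p`.
  have hs : -1 ≤ (y - x) / x := by rw [le_div_iff₀ hx]; linarith
  have hbern := one_add_mul_self_le_rpow_one_add hs hp.le
  rw [show 1 + (y - x) / x = y / x by field_simp; ring, Real.div_rpow hy hx.le,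
    le_div_iff₀ (Real.rpow_pos_of_pos hx p)] at hbern
  calc x ^ p + p * x ^ (p - 1) * (y - x)
      = (1 + p * ((y - x) / x)) * x ^ p := by
        rw [Real.rpow_sub hx, Real.rpow_one]; field_simp
    _ ≤ y ^ p := hbern

lemma div_one_sub_add_lt {u v : ℝ} (hu : u < 1) (hv : v < 1) (huv : u ≠ v) :
    u / (1 - u) + (v - u) / (1 - u) ^ 2 < v / (1 - v) := by
  have hu' : 0 < 1 - u := by linarith
  have hv' : 0 < 1 - v := by linarith
  have hgap : v / (1 - v) - (u / (1 - u) + (v - u) / (1 - u) ^ 2)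
      = (v - u) ^ 2 / ((1 - u) ^ 2 * (1 - v)) := by
    field_simp
    ring
  have hpos : 0 < (v - u) ^ 2 / ((1 - u) ^ 2 * (1 - v)) :=
    div_pos (sq_pos_of_ne_zero (sub_ne_zero.2 huv.symm)) (by positivity)
  linarith

noncomputable def linkCost (γ x : ℝ) : ℝ := x ^ γ / (1 - x ^ γ)

noncomputable def linkCostDeriv (γ x : ℝ) : ℝ := γ * x ^ (γ - 1) / (1 - x ^ γ) ^ 2

noncomputable def linkCostBregman (γ x y : ℝ) : ℝ :=
  linkCost γ y - linkCost γ x - linkCostDeriv γ x * (y - x)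

lemma linkCostBregman_pos {γ : ℝ} (hγ : 1 < γ) {x y : ℝ} (hx₀ : 0 ≤ x) (hx₁ : x < 1)
    (hy₀ : 0 ≤ y) (hy₁ : y < 1) (hxy : x ≠ y) : 0 < linkCostBregman γ x y := by
  have hγ₀ : 0 < γ := by linarith
  -- `linkCost γ = h ∘ (· ^ γ)` with `h u = u / (1 - u)` increasing and strictly convex.
  have hu : x ^ γ < 1 := Real.rpow_lt_one hx₀ hx₁ hγ₀
  have huv : x ^ γ ≠ y ^ γ := fun h => hxy (Real.rpow_left_injOn hγ₀.ne' hx₀ hy₀ h)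
  have htangent : γ * x ^ (γ - 1) * (y - x) ≤ y ^ γ - x ^ γ := by
    linarith [rpow_tangent_le hγ.le hx₀ hy₀]
  have hlt : linkCost γ x + linkCostDeriv γ x * (y - x) < linkCost γ y :=
    calc linkCost γ x + linkCostDeriv γ x * (y - x)
        = x ^ γ / (1 - x ^ γ) + γ * x ^ (γ - 1) * (y - x) / (1 - x ^ γ) ^ 2 := by
          rw [linkCost, linkCostDeriv, div_mul_eq_mul_div]
      _ ≤ x ^ γ / (1 - x ^ γ) + (y ^ γ - x ^ γ) / (1 - x ^ γ) ^ 2 := by gcongr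
      _ < linkCost γ y := div_one_sub_add_lt hu (Real.rpow_lt_one hy₀ hy₁ hγ₀) huv
  rw [linkCostBregman]
  linarith

lemma linkCostBregman_nonneg {γ : ℝ} (hγ : 1 < γ) {x y : ℝ} (hx₀ : 0 ≤ x) (hx₁ : x < 1)
    (hy₀ : 0 ≤ y) (hy₁ : y < 1) : 0 ≤ linkCostBregman γ x y := by
  rcases eq_or_ne x y with rfl | hxy
  · simp [linkCostBregman]
  · exact (linkCostBregman_pos hγ hx₀ hx₁ hy₀ hy₁ hxy).le

lemma Finset.sum_sum_nonpos_of_add_swap_nonpos {ι M : Type*} [Fintype ι] [AddCommGroup M]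
    [LinearOrder M] [IsOrderedAddMonoid M] (f : ι → ι → M) (h : ∀ i j, f i j + f j i ≤ 0) :
    ∑ i, ∑ j, f i j ≤ 0 := by
  have hdouble : ∑ i, ∑ j, f i j + ∑ i, ∑ j, f i j ≤ 0 := by
    nth_rewrite 2 [sum_comm]
    simp only [← sum_add_distrib]
    exact sum_nonpos fun i _ => sum_nonpos fun j _ => h i j
  by_contra! hpos
  exact (add_pos hpos hpos).not_ge hdouble

section SocialObjective

variable {N : ℕ} {κ γ δ : ℝ} {c α β : Fin N → Fin N → ℝ}

noncomputable def weightedDegree (N : ℕ) (α : Fin N → Fin N → ℝ) (i : Fin N) : ℝ :=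
  ∑ k ∈ univ.erase i, α i k

lemma WeightFeasible.weightedDegree_nonneg (hα : WeightFeasible N α) (i : Fin N) :
    0 ≤ weightedDegree N α i :=
  sum_nonneg fun j hj => (hα.2.2.1 i j (ne_of_mem_erase hj).symm).1

/-- The partial derivative of `Uind N κ γ δ c i` in the entry `α i j`. Since `α` is symmetric,
the derivative of `socialObj` in the pair `{i, j}` is `UindPartial … i j + UindPartial … j i`. -/
noncomputable def UindPartial (N : ℕ) (κ γ δ : ℝ) (c α : Fin N → Fin N → ℝ) (i j : Fin N) : ℝ :=
  κ * c i j - linkCostDeriv γ (α i j) - δ * weightedDegree N α i ^ (δ - 1)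

lemma Uind_le_add_partial (hδ : 1 ≤ δ) (i : Fin N) (hα : 0 ≤ weightedDegree N α i)
    (hβ : 0 ≤ weightedDegree N β i) :
    Uind N κ γ δ c i β ≤ Uind N κ γ δ c i α
      + ∑ j ∈ univ.erase i, ((β i j - α i j) * UindPartial N κ γ δ c α i j
        - linkCostBregman γ (α i j) (β i j)) := by
  have hrow : ∑ j ∈ univ.erase i, ((β i j - α i j) * UindPartial N κ γ δ c α i j
        - linkCostBregman γ (α i j) (β i j))
      = ∑ j ∈ univ.erase i, (κ * β i j * c i j - β i j ^ γ / (1 - β i j ^ γ))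
        - ∑ j ∈ univ.erase i, (κ * α i j * c i j - α i j ^ γ / (1 - α i j ^ γ))
        - δ * weightedDegree N α i ^ (δ - 1)
          * (weightedDegree N β i - weightedDegree N α i) := by
    simp only [weightedDegree, ← sum_sub_distrib, mul_sum]
    refine sum_congr rfl fun j _ => ?_
    rw [UindPartial, weightedDegree, linkCostBregman, linkCost, linkCost]
    ring
  have hconvex := rpow_tangent_le hδ hα hβ
  rw [hrow, Uind, Uind]
  simp only [weightedDegree] at hconvex ⊢
  linarith

lemma UindPartial_add_UindPartial_swap {cbar : Fin N → Fin N → ℝ}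
    (hαs : ∀ i j, α i j = α j i) (hcs : ∀ i j, c i j = c j i) {i j : Fin N}
    (hcbar : 2 * κ * cbar i j =
      2 * γ * α i j ^ (γ - 1) / (1 - α i j ^ γ) ^ 2
        + δ * (∑ k ∈ univ.erase i, α i k) ^ (δ - 1)
        + δ * (∑ k ∈ univ.erase j, α j k) ^ (δ - 1)) :
    UindPartial N κ γ δ c α i j + UindPartial N κ γ δ c α j i = 2 * κ * (c i j - cbar i j) := by
  rw [UindPartial, UindPartial, hαs j i, hcs j i, linkCostDeriv, weightedDegree, weightedDegree]
  linear_combination hcbar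

lemma sum_sum_erase_mul_UindPartial_nonpos (hκ : 0 ≤ κ) (hα : WeightFeasible N α)
    (hβ : WeightFeasible N β) {cbar : Fin N → Fin N → ℝ}
    (hcbar : ∀ i j, i ≠ j → 2 * κ * cbar i j =
      2 * γ * α i j ^ (γ - 1) / (1 - α i j ^ γ) ^ 2
        + δ * (∑ k ∈ univ.erase i, α i k) ^ (δ - 1)
        + δ * (∑ k ∈ univ.erase j, α j k) ^ (δ - 1))
    (hcs : ∀ i j, c i j = c j i)
    (hceq : ∀ i j, i ≠ j → 0 < α i j → c i j = cbar i j)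
    (hcle : ∀ i j, i ≠ j → α i j = 0 → c i j ≤ cbar i j) :
    ∑ i, ∑ j ∈ univ.erase i, (β i j - α i j) * UindPartial N κ γ δ c α i j ≤ 0 := by
  obtain ⟨hαs, hαd, hαI, -⟩ := hα
  obtain ⟨hβs, hβd, hβI, -⟩ := hβ
  have hdiag : ∀ i, (β i i - α i i) * UindPartial N κ γ δ c α i i = 0 := fun i => by
    rw [hβd, hαd, sub_self, zero_mul]
  rw [sum_congr rfl fun i _ => sum_erase univ
    (f := fun j => (β i j - α i j) * UindPartial N κ γ δ c α i j) (hdiag i)]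
  refine sum_sum_nonpos_of_add_swap_nonpos _ fun i j => ?_
  rcases eq_or_ne i j with rfl | hij
  · rw [hdiag, add_zero]
  rw [hβs j i, hαs j i, ← mul_add, UindPartial_add_UindPartial_swap hαs hcs (hcbar i j hij)]
  rcases (hαI i j hij).1.eq_or_lt with hzero | hpos
  · have hgrow : 0 ≤ β i j - α i j := by linarith [(hβI i j hij).1]
    have hcheap : 2 * κ * (c i j - cbar i j) ≤ 0 :=
      mul_nonpos_of_nonneg_of_nonpos (by positivity) (sub_nonpos.2 (hcle i j hij hzero.symm))
    exact mul_nonpos_of_nonneg_of_nonpos hgrow hcheap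
  · rw [hceq i j hij hpos, sub_self, mul_zero, mul_zero]

lemma sum_sum_erase_linkCostBregman_pos (hγ : 1 < γ) (hα : WeightFeasible N α)
    (hβ : WeightFeasible N β) (hne : β ≠ α) :
    0 < ∑ i, ∑ j ∈ univ.erase i, linkCostBregman γ (α i j) (β i j) := by
  obtain ⟨-, hαd, hαI, -⟩ := hα
  obtain ⟨-, hβd, hβI, -⟩ := hβ
  obtain ⟨i₀, j₀, hij₀, hdiff⟩ : ∃ i j, i ≠ j ∧ α i j ≠ β i j := by
    by_contra! h
    refine hne (funext₂ fun i j => ?_)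
    rcases eq_or_ne i j with rfl | hij
    · rw [hαd, hβd]
    · exact (h i j hij).symm
  have hnonneg : ∀ i, ∀ j ∈ univ.erase i, 0 ≤ linkCostBregman γ (α i j) (β i j) :=
    fun i j hj => have hij := (ne_of_mem_erase hj).symm
      linkCostBregman_nonneg hγ (hαI i j hij).1 (hαI i j hij).2 (hβI i j hij).1 (hβI i j hij).2
  have hpos : 0 < linkCostBregman γ (α i₀ j₀) (β i₀ j₀) :=
    linkCostBregman_pos hγ (hαI i₀ j₀ hij₀).1 (hαI i₀ j₀ hij₀).2 (hβI i₀ j₀ hij₀).1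
      (hβI i₀ j₀ hij₀).2 hdiff
  exact sum_pos' (fun i _ => sum_nonneg (hnonneg i))
    ⟨i₀, mem_univ _, sum_pos' (hnonneg i₀) ⟨j₀, mem_erase.2 ⟨hij₀.symm, mem_univ _⟩, hpos⟩⟩

end SocialObjective

theorem stmt_12_general (N : ℕ) (κ γ δ : ℝ) (hκ : 1 < κ) (hγ : 1 < γ) (hδ : 1 < δ)
    (α : Fin N → Fin N → ℝ) (hα : WeightFeasible N α)
    (cbar : Fin N → Fin N → ℝ)
    (hcbar : ∀ i j, i ≠ j → 2 * κ * cbar i j =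
      2 * γ * α i j ^ (γ - 1) / (1 - α i j ^ γ) ^ 2
        + δ * (∑ k ∈ Finset.univ.erase i, α i k) ^ (δ - 1)
        + δ * (∑ k ∈ Finset.univ.erase j, α j k) ^ (δ - 1))
    (c : Fin N → Fin N → ℝ) (hcs : ∀ i j, c i j = c j i)
    (hceq : ∀ i j, i ≠ j → 0 < α i j → c i j = cbar i j)
    (hcle : ∀ i j, i ≠ j → α i j = 0 → c i j ≤ cbar i j) :
    ∀ β : Fin N → Fin N → ℝ, WeightFeasible N β → β ≠ α →
      socialObj N κ γ δ c β < socialObj N κ γ δ c α := by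
  intro β hβ hne
  have hfirstOrder : socialObj N κ γ δ c β ≤ socialObj N κ γ δ c α
      + ∑ i, ∑ j ∈ univ.erase i, (β i j - α i j) * UindPartial N κ γ δ c α i j
      - ∑ i, ∑ j ∈ univ.erase i, linkCostBregman γ (α i j) (β i j) := by
    simp only [socialObj, add_sub_assoc, ← sum_sub_distrib, ← sum_add_distrib]
    exact sum_le_sum fun i _ => Uind_le_add_partial hδ.le i
      (hα.weightedDegree_nonneg i) (hβ.weightedDegree_nonneg i)
  linarith [sum_sum_erase_mul_UindPartial_nonpos (by linarith) hα hβ hcbar hcs hceq hcle,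
    sum_sum_erase_linkCostBregman_pos hγ hα hβ hne]

/-- Let α be a feasible weight list and C̄ the compatibility list given by
2κ c̄_{ij} = 2γ α_{ij}^{γ−1}/(1−α_{ij}^γ)² + δ(Σ_{k≠i} α_{ik})^{δ−1}
+ δ(Σ_{k≠j} α_{jk})^{δ−1}. Then for every positive compatibility list C with
c_{ij} = c̄_{ij} whenever α_{ij} > 0 and 0 < c_{ij} ≤ c̄_{ij} whenever
α_{ij} = 0, the weight list α is the unique solution of the Social
Optimization Problem with compatibility list C. -/
theorem stmt_12 (N : ℕ) (hN : 2 ≤ N) (κ γ δ : ℝ) (hκ : 1 < κ) (hγ : 1 < γ) (hδ : 1 < δ)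
    (α : Fin N → Fin N → ℝ) (hα : WeightFeasible N α)
    (cbar : Fin N → Fin N → ℝ) (hcbars : ∀ i j, cbar i j = cbar j i)
    (hcbar : ∀ i j, i ≠ j → 2 * κ * cbar i j =
      2 * γ * α i j ^ (γ - 1) / (1 - α i j ^ γ) ^ 2
        + δ * (∑ k ∈ Finset.univ.erase i, α i k) ^ (δ - 1)
        + δ * (∑ k ∈ Finset.univ.erase j, α j k) ^ (δ - 1))
    (c : Fin N → Fin N → ℝ) (hcs : ∀ i j, c i j = c j i)
    (hcpos : ∀ i j, i ≠ j → 0 < c i j)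
    (hceq : ∀ i j, i ≠ j → 0 < α i j → c i j = cbar i j)
    (hcle : ∀ i j, i ≠ j → α i j = 0 → c i j ≤ cbar i j) :
    ∀ β : Fin N → Fin N → ℝ, WeightFeasible N β → β ≠ α →
      socialObj N κ γ δ c β < socialObj N κ γ δ c α :=
  stmt_12_general N κ γ δ hκ hγ hδ α hα cbar hcbar c hcs hceq hcle
end

section
/- Let N ≥ 2, κ, γ, δ > 1, and let (c_{ij})_{i≠j} be a symmetric family of positive reals such that every vector C^i = (c_{ij})_{j≠i} is a permutation of a common vector c̄ ∈ (0,∞)^{N−1}. For each i let (α^i)* be the unique maximizer of the ALKY utility U(·; C^i) on [0,1)^{N−1}. Then the weight list α** defined by α**_{ij} = (α^i)*_j (well defined since (α^i)*_j = (α^j)*_i) maximizes the social objective O(α) = Σ_{i=1}^N U_i(α) over [0,1)^{n_N}: the decentralized individual optima coincide with the social optimum. -/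
/-- The ALKY utility function over an arbitrary finite index type, with
parameters κ, γ, δ and compatibility vector c, as a function of the weight
vector α. -/
noncomputable def ALKY' {ι : Type*} [Fintype ι] (κ γ δ : ℝ) (c : ι → ℝ)
    (α : ι → ℝ) : ℝ :=
  (∑ j, (κ * α j * c j - α j ^ γ / (1 - α j ^ γ))) - (∑ j, α j) ^ δ

/-!
The ALKY utility is invariant under a simultaneous permutation of the compatibilities and
the weights. Hence, by uniqueness, the optimum of individual `k` is the optimum of individual
`m` transported along any bijection matching their compatibility vectors, and within one
individual equal compatibilities receive equal optimal weights. Both facts together with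
`c k m = c m k` give `(α^k)*_m = (α^m)*_k`. The social objective is the sum of the individual
utilities, each evaluated only on the row `β i`, so it is maximized by maximizing every
summand separately.
-/

open Finset

section ALKY

variable {ι ι' : Type*} [Fintype ι] [Fintype ι'] (κ γ δ : ℝ)

lemma ALKY'_comp_equiv (c α : ι → ℝ) (e : ι' ≃ ι) :
    ALKY' κ γ δ (c ∘ e) (α ∘ e) = ALKY' κ γ δ c α := by
  unfold ALKY'
  simp only [Function.comp_apply]
  rw [Equiv.sum_comp e (fun j => κ * α j * c j - α j ^ γ / (1 - α j ^ γ)), Equiv.sum_comp e α]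

def IsUniqueALKYMaximizer (c a : ι → ℝ) : Prop :=
  (∀ j, a j ∈ Set.Ico (0 : ℝ) 1) ∧
    ∀ β : ι → ℝ, (∀ j, β j ∈ Set.Ico (0 : ℝ) 1) → β ≠ a → ALKY' κ γ δ c β < ALKY' κ γ δ c a

variable {κ γ δ}

namespace IsUniqueALKYMaximizer

lemma le {c a : ι → ℝ} (h : IsUniqueALKYMaximizer κ γ δ c a) {β : ι → ℝ}
    (hβ : ∀ j, β j ∈ Set.Ico (0 : ℝ) 1) : ALKY' κ γ δ c β ≤ ALKY' κ γ δ c a := by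
  rcases eq_or_ne β a with rfl | hne
  · exact le_rfl
  · exact (h.2 β hβ hne).le

lemma unique {c a b : ι → ℝ} (ha : IsUniqueALKYMaximizer κ γ δ c a)
    (hb : IsUniqueALKYMaximizer κ γ δ c b) : a = b := by
  by_contra hne
  exact lt_asymm (ha.2 b hb.1 (Ne.symm hne)) (hb.2 a ha.1 hne)

lemma comp_equiv {c a : ι → ℝ} (h : IsUniqueALKYMaximizer κ γ δ c a) (e : ι' ≃ ι) :
    IsUniqueALKYMaximizer κ γ δ (c ∘ e) (a ∘ e) := by
  refine ⟨fun j => h.1 (e j), fun β hβ hne => ?_⟩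
  have hne' : β ∘ e.symm ≠ a := fun hβa => hne (by rw [← hβa]; ext; simp)
  calc ALKY' κ γ δ (c ∘ e) β
      = ALKY' κ γ δ (c ∘ e) ((β ∘ e.symm) ∘ e) := by congr 1; ext; simp
    _ = ALKY' κ γ δ c (β ∘ e.symm) := ALKY'_comp_equiv κ γ δ c _ e
    _ < ALKY' κ γ δ c a := h.2 _ (fun j => hβ (e.symm j)) hne'
    _ = ALKY' κ γ δ (c ∘ e) (a ∘ e) := (ALKY'_comp_equiv κ γ δ c a e).symm

lemma eq_comp_of_comp_eq {c a : ι → ℝ} {c' b : ι' → ℝ} (ha : IsUniqueALKYMaximizer κ γ δ c a)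
    (hb : IsUniqueALKYMaximizer κ γ δ c' b) (e : ι' ≃ ι) (hc : c ∘ e = c') : b = a ∘ e :=
  hb.unique (hc ▸ ha.comp_equiv e)

lemma apply_eq_of_apply_eq [DecidableEq ι] {c a : ι → ℝ} (h : IsUniqueALKYMaximizer κ γ δ c a)
    {j j' : ι} (hc : c j = c j') : a j = a j' := by
  have hswap : c ∘ Equiv.swap j j' = c := by
    ext t
    rw [Function.comp_apply, Equiv.swap_apply_def]
    split_ifs <;> simp_all
  simpa using congrFun (h.eq_comp_of_comp_eq h (Equiv.swap j j') hswap) j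

end IsUniqueALKYMaximizer

end ALKY

section Social

variable {N : ℕ} {κ γ δ : ℝ} {c : Fin N → Fin N → ℝ}

lemma Uind_eq_ALKY' (i : Fin N) (α : Fin N → Fin N → ℝ) :
    Uind N κ γ δ c i α =
      ALKY' κ γ δ (fun j : {j : Fin N // j ≠ i} => c i j) (fun j => α i j) := by
  have hmem : ∀ x : Fin N, x ∈ univ.erase i ↔ x ≠ i := fun x => by simp
  unfold Uind ALKY'
  rw [sum_subtype _ hmem (fun j => κ * α i j * c i j - α i j ^ γ / (1 - α i j ^ γ)),
    sum_subtype _ hmem (fun j => α i j)]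

lemma socialObj_le_of_isUniqueALKYMaximizer {a : (i : Fin N) → {j : Fin N // j ≠ i} → ℝ}
    (ha : ∀ i, IsUniqueALKYMaximizer κ γ δ (fun j : {j : Fin N // j ≠ i} => c i j) (a i))
    {β : Fin N → Fin N → ℝ} (hβ : ∀ i j, i ≠ j → β i j ∈ Set.Ico (0 : ℝ) 1) :
    socialObj N κ γ δ c β ≤
      socialObj N κ γ δ c (fun i j => if h : j ≠ i then a i ⟨j, h⟩ else 0) := by
  refine sum_le_sum fun i _ => ?_
  rw [Uind_eq_ALKY', Uind_eq_ALKY']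
  have hrow : (fun j : {j : Fin N // j ≠ i} => if h : (j : Fin N) ≠ i then a i ⟨j, h⟩ else 0)
      = a i := funext fun j => dif_pos j.prop
  simpa only [hrow] using (ha i).le fun j => hβ i j (Ne.symm j.prop)

end Social

theorem stmt_15_general (N : ℕ) (κ γ δ : ℝ)
    (c : Fin N → Fin N → ℝ) (hcs : ∀ i j, c i j = c j i)
    (cbar : Fin (N - 1) → ℝ)
    (hperm : ∀ i : Fin N, ∃ e : {j : Fin N // j ≠ i} ≃ Fin (N - 1),
      ∀ j : {j : Fin N // j ≠ i}, c i j.val = cbar (e j))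
    (αstar : (i : Fin N) → {j : Fin N // j ≠ i} → ℝ)
    (hmem : ∀ (i : Fin N) (j : {j : Fin N // j ≠ i}), αstar i j ∈ Set.Ico (0:ℝ) 1)
    (hmax : ∀ i : Fin N, ∀ β : {j : Fin N // j ≠ i} → ℝ,
      (∀ j, β j ∈ Set.Ico (0:ℝ) 1) → β ≠ αstar i →
      ALKY' κ γ δ (fun j : {j : Fin N // j ≠ i} => c i j.val) β <
        ALKY' κ γ δ (fun j : {j : Fin N // j ≠ i} => c i j.val) (αstar i)) :
    (∀ (k m : Fin N) (h : k ≠ m), αstar k ⟨m, h.symm⟩ = αstar m ⟨k, h⟩) ∧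
    (∀ β : Fin N → Fin N → ℝ, (∀ i j, β i j = β j i) → (∀ i, β i i = 0) →
      (∀ i j, i ≠ j → β i j ∈ Set.Ico (0:ℝ) 1) →
      socialObj N κ γ δ c β ≤
        socialObj N κ γ δ c
          (fun i j => if h : j ≠ i then αstar i ⟨j, h⟩ else 0)) := by
  have hopt : ∀ i, IsUniqueALKYMaximizer κ γ δ (fun j : {j : Fin N // j ≠ i} => c i j)
      (αstar i) := fun i => ⟨hmem i, hmax i⟩
  refine ⟨fun k m h => ?_, fun β _ _ hβ => socialObj_le_of_isUniqueALKYMaximizer hopt hβ⟩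
  obtain ⟨ek, hek⟩ := hperm k
  obtain ⟨em, hem⟩ := hperm m
  have hc : (fun j : {j : Fin N // j ≠ m} => c m j) ∘ (ek.trans em.symm) =
      fun j : {j : Fin N // j ≠ k} => c k j := by
    ext j
    simpa [hek] using hem (em.symm (ek j))
  rw [congrFun ((hopt m).eq_comp_of_comp_eq (hopt k) _ hc) ⟨m, h.symm⟩]
  refine (hopt m).apply_eq_of_apply_eq ?_
  rw [← hcs k m]
  exact congrFun hc ⟨m, h.symm⟩

/-- Invisible hand: if all the compatibility "columns" C^i = (c_{ij})_{j≠i}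
are permutations of a common vector c̄, and (α^i)* is the unique maximizer of
the ALKY utility U(·; C^i) on [0,1)^{N−1}, then the weight list
α**_{ij} = (α^i)*_j is well defined (symmetric) and maximizes the social
objective O(α) = Σ_i U_i(α) over [0,1)^{n_N}. -/
theorem stmt_15 (N : ℕ) (hN : 2 ≤ N) (κ γ δ : ℝ) (hκ : 1 < κ) (hγ : 1 < γ) (hδ : 1 < δ)
    (c : Fin N → Fin N → ℝ) (hcs : ∀ i j, c i j = c j i)
    (hcpos : ∀ i j, i ≠ j → 0 < c i j)
    (cbar : Fin (N - 1) → ℝ)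
    (hperm : ∀ i : Fin N, ∃ e : {j : Fin N // j ≠ i} ≃ Fin (N - 1),
      ∀ j : {j : Fin N // j ≠ i}, c i j.val = cbar (e j))
    (αstar : (i : Fin N) → {j : Fin N // j ≠ i} → ℝ)
    (hmem : ∀ (i : Fin N) (j : {j : Fin N // j ≠ i}), αstar i j ∈ Set.Ico (0:ℝ) 1)
    (hmax : ∀ i : Fin N, ∀ β : {j : Fin N // j ≠ i} → ℝ,
      (∀ j, β j ∈ Set.Ico (0:ℝ) 1) → β ≠ αstar i →
      ALKY' κ γ δ (fun j : {j : Fin N // j ≠ i} => c i j.val) β <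
        ALKY' κ γ δ (fun j : {j : Fin N // j ≠ i} => c i j.val) (αstar i)) :
    (∀ (k m : Fin N) (h : k ≠ m), αstar k ⟨m, h.symm⟩ = αstar m ⟨k, h⟩) ∧
    (∀ β : Fin N → Fin N → ℝ, (∀ i j, β i j = β j i) → (∀ i, β i i = 0) →
      (∀ i j, i ≠ j → β i j ∈ Set.Ico (0:ℝ) 1) →
      socialObj N κ γ δ c β ≤
        socialObj N κ γ δ c
          (fun i j => if h : j ≠ i then αstar i ⟨j, h⟩ else 0)) :=
  stmt_15_general N κ γ δ c hcs cbar hperm αstar hmem hmax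
end

section
/- Let N ≥ 2, κ, γ, δ > 1, let C be a compatibility list of positive reals, and let α* be the unique solution of the Social Optimization Problem. Then the graph defined by α* is pairwise stable: for every pair i < j and every a ∈ [0,1) with a ≠ α*_{ij}, letting α' be equal to α* except that α'_{ij} = a, if α' lies in the feasible set F then at least one of the two individuals strictly loses, i.e. U_i(α') < U_i(α*) or U_j(α') < U_j(α*). -/
/-- The weight matrix obtained from `α` by setting the (symmetric) weight of
the edge {i,j} to `t`, keeping all other entries unchanged. -/
def upd {N : ℕ} (α : Fin N → Fin N → ℝ) (i j : Fin N) (t : ℝ) :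
    Fin N → Fin N → ℝ :=
  fun k l => if (k = i ∧ l = j) ∨ (k = j ∧ l = i) then t else α k l


/-!
Only the two endpoints of the edge `{i, j}` see a change in their utility when its weight is
modified. If neither of them strictly loses, the social objective, being the sum of all utilities,
does not decrease, which contradicts the strict optimality of `α*`.
-/

section PairwiseStability

variable {N : ℕ} (κ γ δ : ℝ) (c : Fin N → Fin N → ℝ)

theorem upd_apply_of_ne (α : Fin N → Fin N → ℝ) {i j k : Fin N} (t : ℝ) (hki : k ≠ i)
    (hkj : k ≠ j) (l : Fin N) : upd α i j t k l = α k l := by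
  simp [upd, hki, hkj]

theorem upd_ne_self (α : Fin N → Fin N → ℝ) (i j : Fin N) {t : ℝ} (ht : t ≠ α i j) :
    upd α i j t ≠ α := by
  intro h
  apply ht
  simpa [upd] using congrFun (congrFun h i) j

theorem Uind_congr_row {α β : Fin N → Fin N → ℝ} {k : Fin N} (h : ∀ l, β k l = α k l) :
    Uind N κ γ δ c k β = Uind N κ γ δ c k α := by
  simp only [Uind, h]

theorem Uind_upd_of_ne (α : Fin N → Fin N → ℝ) {i j k : Fin N} (t : ℝ) (hki : k ≠ i)
    (hkj : k ≠ j) : Uind N κ γ δ c k (upd α i j t) = Uind N κ γ δ c k α :=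
  Uind_congr_row κ γ δ c (upd_apply_of_ne α t hki hkj)

theorem socialObj_le_socialObj_upd (α : Fin N → Fin N → ℝ) {i j : Fin N} (t : ℝ)
    (hi : Uind N κ γ δ c i α ≤ Uind N κ γ δ c i (upd α i j t))
    (hj : Uind N κ γ δ c j α ≤ Uind N κ γ δ c j (upd α i j t)) :
    socialObj N κ γ δ c α ≤ socialObj N κ γ δ c (upd α i j t) := by
  refine Finset.sum_le_sum fun k _ => ?_
  by_cases hki : k = i
  · exact hki ▸ hi
  by_cases hkj : k = j
  · exact hkj ▸ hj
  exact (Uind_upd_of_ne κ γ δ c α t hki hkj).ge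

end PairwiseStability

theorem stmt_17_general (N : ℕ) (κ γ δ : ℝ)
    (c : Fin N → Fin N → ℝ)
    (αstar : Fin N → Fin N → ℝ)
    (hmax : ∀ β : Fin N → Fin N → ℝ, WeightFeasible N β → β ≠ αstar →
      socialObj N κ γ δ c β < socialObj N κ γ δ c αstar) :
    ∀ i j : Fin N, i ≠ j → ∀ a ∈ Set.Ico (0:ℝ) 1, a ≠ αstar i j →
      WeightFeasible N (upd αstar i j a) →
      Uind N κ γ δ c i (upd αstar i j a) < Uind N κ γ δ c i αstar ∨
      Uind N κ γ δ c j (upd αstar i j a) < Uind N κ γ δ c j αstar := by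
  intro i j _ a _ hne hfeas
  by_contra! h
  have hlt := hmax _ hfeas (upd_ne_self αstar i j hne)
  have hle := socialObj_le_socialObj_upd κ γ δ c αstar a h.1 h.2
  exact hlt.not_ge hle

/-- The unique solution α* of the Social Optimization Problem is pairwise
stable: for every pair i ≠ j and every alternative weight a ∈ [0,1) with
a ≠ α*_{ij}, if changing only the weight of the edge {i,j} to a stays in the
feasible set, then at least one of the two individuals strictly loses. -/
theorem stmt_17 (N : ℕ) (hN : 2 ≤ N) (κ γ δ : ℝ) (hκ : 1 < κ) (hγ : 1 < γ) (hδ : 1 < δ)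
    (c : Fin N → Fin N → ℝ) (hcs : ∀ i j, c i j = c j i)
    (hcpos : ∀ i j, i ≠ j → 0 < c i j)
    (αstar : Fin N → Fin N → ℝ) (hfeas : WeightFeasible N αstar)
    (hmax : ∀ β : Fin N → Fin N → ℝ, WeightFeasible N β → β ≠ αstar →
      socialObj N κ γ δ c β < socialObj N κ γ δ c αstar) :
    ∀ i j : Fin N, i ≠ j → ∀ a ∈ Set.Ico (0:ℝ) 1, a ≠ αstar i j →
      WeightFeasible N (upd αstar i j a) →
      Uind N κ γ δ c i (upd αstar i j a) < Uind N κ γ δ c i αstar ∨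
      Uind N κ γ δ c j (upd αstar i j a) < Uind N κ γ δ c j αstar :=
  stmt_17_general N κ γ δ c αstar hmax
end
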